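/- With Â, Â† as above and T̃_4 := 4(T_2 + b² − 1)∘Â − 3(T_2 + b²)∘(T_2 + b² − 2), the identity T̃_4 ∘ (x+b) = (x+b) ∘ Â ∘ Â† holds as operators on smooth functions away from x = −b. -/

import Mathlib

/-- The classical Hermite differential operator T₂ = ∂ₓ² − 2x∂ₓ. -/
noncomputable def T2 (f : ℝ → ℝ) : ℝ → ℝ := fun x => deriv (deriv f) x - 2 * x * deriv f x

/-- U = ∂ₓ + b. -/
noncomputable def Uop (b : ℝ) (f : ℝ → ℝ) : ℝ → ℝ := fun x => deriv f x + b * f x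

/-- V = −∂ₓ + 2x + b. -/
noncomputable def Vop (b : ℝ) (f : ℝ → ℝ) : ℝ → ℝ := fun x => -deriv f x + (2 * x + b) * f x

/-- Â = T₂ + b² − (x+b)⁻¹ ∘ U. -/
noncomputable def Ahat (b : ℝ) (f : ℝ → ℝ) : ℝ → ℝ :=
  fun x => T2 f x + b ^ 2 * f x - Uop b f x / (x + b)

/-- Â† = T₂ + b² − V ∘ (x+b)⁻¹. -/
noncomputable def Adag (b : ℝ) (f : ℝ → ℝ) : ℝ → ℝ :=
  fun x => T2 f x + b ^ 2 * f x - Vop b (fun y => f y / (y + b)) x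

/-- T̃₄ = 4(T₂ + b² − 1)∘Â − 3(T₂ + b²)∘(T₂ + b² − 2). -/
noncomputable def T4tilde (b : ℝ) (f : ℝ → ℝ) : ℝ → ℝ :=
  fun x => 4 * (T2 (Ahat b f) x + (b ^ 2 - 1) * Ahat b f x)
    - 3 * (T2 (fun y => T2 f y + (b ^ 2 - 2) * f y) x
        + b ^ 2 * (T2 f x + (b ^ 2 - 2) * f x))

set_option maxHeartbeats 2000000 in
theorem T4tilde_conjugation (b : ℝ) (f : ℝ → ℝ) (hf : ContDiff ℝ (⊤ : ℕ∞) f)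
    (x : ℝ) (hx : x ≠ -b) :
    T4tilde b (fun y => (y + b) * f y) x = (x + b) * Ahat b (Adag b f) x := by
  have hx' : x + b ≠ 0 := fun h => hx (by linarith)
  have hf' : ContDiff ℝ ((⊤ : ℕ∞) : WithTop ℕ∞) f := hf.of_le (by simp)
  have hfc1 : ContDiff ℝ ((⊤ : ℕ∞) : WithTop ℕ∞) (deriv f) := (contDiff_infty_iff_deriv.mp hf').2
  have hfc2 : ContDiff ℝ ((⊤ : ℕ∞) : WithTop ℕ∞) (deriv (deriv f)) := (contDiff_infty_iff_deriv.mp hfc1).2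
  have hfc3 : ContDiff ℝ ((⊤ : ℕ∞) : WithTop ℕ∞) (deriv (deriv (deriv f))) := (contDiff_infty_iff_deriv.mp hfc2).2
  have hd0 : ∀ z : ℝ, HasDerivAt f (deriv f z) z := fun z =>
    (hf'.differentiable (by simp) z).hasDerivAt
  have hd1 : ∀ z : ℝ, HasDerivAt (deriv f) (deriv (deriv f) z) z := fun z =>
    (hfc1.differentiable (by simp) z).hasDerivAt
  have hd2 : ∀ z : ℝ, HasDerivAt (deriv (deriv f)) (deriv (deriv (deriv f)) z) z := fun z =>
    (hfc2.differentiable (by simp) z).hasDerivAt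
  have hd3 : ∀ z : ℝ, HasDerivAt (deriv (deriv (deriv f))) (deriv (deriv (deriv (deriv f))) z) z :=
    fun z => (hfc3.differentiable (by simp) z).hasDerivAt
  have hs1 : ∀ z : ℝ, HasDerivAt (fun w : ℝ => w + b) 1 z := fun z =>
    (hasDerivAt_id z).add_const b
  have hs2 : ∀ z : ℝ, HasDerivAt (fun w : ℝ => (w + b) ^ 2) (2 * (z + b)) z := fun z => by
    simpa using (hs1 z).fun_pow 2
  have hs3 : ∀ z : ℝ, HasDerivAt (fun w : ℝ => (w + b) ^ 3) (3 * (z + b) ^ 2) z := fun z => by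
    simpa using (hs1 z).fun_pow 3
  have hs4 : ∀ z : ℝ, HasDerivAt (fun w : ℝ => (w + b) ^ 4) (4 * (z + b) ^ 3) z := fun z => by
    simpa using (hs1 z).fun_pow 4
  have hdg : ∀ z : ℝ, deriv (fun y => (y + b) * f y) z = 1 * f z + (z + b) * deriv f z :=
    fun z => ((hs1 z).mul (hd0 z)).deriv
  have hdgf : deriv (fun y => (y + b) * f y) = fun z => 1 * f z + (z + b) * deriv f z :=
    funext hdg
  have hddg : ∀ z : ℝ, deriv (deriv (fun y => (y + b) * f y)) z
      = (0 * f z + 1 * deriv f z) + (1 * deriv f z + (z + b) * deriv (deriv f) z) := fun z => by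
    rw [hdgf]
    exact (((hasDerivAt_const z (1 : ℝ)).mul (hd0 z)).add ((hs1 z).mul (hd1 z))).deriv
  have hA1d : ∀ z : ℝ, z + b ≠ 0 → HasDerivAt (fun z : ℝ => (((1 : ℝ) * b ^ 2) * ((z + b) ^ 2 * f z) + (-2 : ℝ) * ((z + b) ^ 2 * f z) + (-1 : ℝ) * f z + ((1 : ℝ) * b) * ((z + b) * f z) + (-2 : ℝ) * ((z + b) ^ 3 * (deriv f) z) + ((2 : ℝ) * b) * ((z + b) ^ 2 * (deriv f) z) + (1 : ℝ) * ((z + b) * (deriv f) z) + (1 : ℝ) * ((z + b) ^ 2 * (deriv (deriv f)) z)) / (z + b)) (((1 : ℝ) * f z + ((1 : ℝ) * b ^ 2) * ((z + b) ^ 2 * f z) + (-2 : ℝ) * ((z + b) ^ 2 * f z) + ((1 : ℝ) * b ^ 2) * ((z + b) ^ 3 * (deriv f) z) + (-6 : ℝ) * ((z + b) ^ 3 * (deriv f) z) + (-1 : ℝ) * ((z + b) * (deriv f) z) + ((3 : ℝ) * b) * ((z + b) ^ 2 * (deriv f) z) + (-2 : ℝ) * ((z + b) ^ 4 * (deriv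 (deriv f)) z) + ((2 : ℝ) * b) * ((z + b) ^ 3 * (deriv (deriv f)) z) + (2 : ℝ) * ((z + b) ^ 2 * (deriv (deriv f)) z) + (1 : ℝ) * ((z + b) ^ 3 * (deriv (deriv (deriv f))) z)) / (z + b) ^ 2) z := by
    intro z hz
    have h := (((((((((((hs2 z).mul (hd0 z)).const_mul ((1 : ℝ) * b ^ 2)).add (((hs2 z).mul (hd0 z)).const_mul (-2 : ℝ))).add ((hd0 z).const_mul (-1 : ℝ))).add (((hs1 z).mul (hd0 z)).const_mul ((1 : ℝ) * b))).add (((hs3 z).mul (hd1 z)).const_mul (-2 : ℝ))).add (((hs2 z).mul (hd1 z)).const_mul ((2 : ℝ) * b))).add (((hs1 z).mul (hd1 z)).const_mul (1 : ℝ))).add (((hs2 z).mul (hd2 z)).const_mul (1 : ℝ))).div (hs1 z) hz)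
    refine h.congr_deriv ?_
    simp only [Pi.add_apply, Pi.mul_apply]
    field_simp
    ring
  have hA2d : ∀ z : ℝ, z + b ≠ 0 → HasDerivAt (fun z : ℝ => ((1 : ℝ) * f z + ((1 : ℝ) * b ^ 2) * ((z + b) ^ 2 * f z) + (-2 : ℝ) * ((z + b) ^ 2 * f z) + ((1 : ℝ) * b ^ 2) * ((z + b) ^ 3 * (deriv f) z) + (-6 : ℝ) * ((z + b) ^ 3 * (deriv f) z) + (-1 : ℝ) * ((z + b) * (deriv f) z) + ((3 : ℝ) * b) * ((z + b) ^ 2 * (deriv f) z) + (-2 : ℝ) * ((z + b) ^ 4 * (deriv (deriv f)) z) + ((2 : ℝ) * b) * ((z + b) ^ 3 * (deriv (deriv f)) z) + (2 : ℝ) * ((z + b) ^ 2 * (deriv (deriv f)) z) + (1 : ℝ) * ((z + b) ^ 3 * (deriv (deriv (deriv f))) z)) / (z + b) ^ 2) (((-2 : ℝ) * f z + (2 : ℝ) * ((z + b) * (deriv f) z) + ((2 : ℝ) * b ^ 2) * ((z + b) ^ 3 * (deriv f) z) + (-8 : ℝ) * ((z + b) ^ 3 * (deriv f) z) + ((1 :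 ℝ) * b ^ 2) * ((z + b) ^ 4 * (deriv (deriv f)) z) + (-10 : ℝ) * ((z + b) ^ 4 * (deriv (deriv f)) z) + (-1 : ℝ) * ((z + b) ^ 2 * (deriv (deriv f)) z) + ((5 : ℝ) * b) * ((z + b) ^ 3 * (deriv (deriv f)) z) + (-2 : ℝ) * ((z + b) ^ 5 * (deriv (deriv (deriv f))) z) + ((2 : ℝ) * b) * ((z + b) ^ 4 * (deriv (deriv (deriv f))) z) + (3 : ℝ) * ((z + b) ^ 3 * (deriv (deriv (deriv f))) z) + (1 : ℝ) * ((z + b) ^ 4 * (deriv (deriv (deriv (deriv f)))) z)) / (z + b) ^ 3) z := by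
    intro z hz
    have h := (((((((((((((hd0 z).const_mul (1 : ℝ)).add (((hs2 z).mul (hd0 z)).const_mul ((1 : ℝ) * b ^ 2))).add (((hs2 z).mul (hd0 z)).const_mul (-2 : ℝ))).add (((hs3 z).mul (hd1 z)).const_mul ((1 : ℝ) * b ^ 2))).add (((hs3 z).mul (hd1 z)).const_mul (-6 : ℝ))).add (((hs1 z).mul (hd1 z)).const_mul (-1 : ℝ))).add (((hs2 z).mul (hd1 z)).const_mul ((3 : ℝ) * b))).add (((hs4 z).mul (hd2 z)).const_mul (-2 : ℝ))).add (((hs3 z).mul (hd2 z)).const_mul ((2 : ℝ) * b))).add (((hs2 z).mul (hd2 z)).const_mul (2 : ℝ))).add (((hs3 z).mul (hd3 z)).const_mul (1 : ℝ))).div (hs2 z) (pow_ne_zero 2 hz))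
    refine h.congr_deriv ?_
    simp only [Pi.add_apply, Pi.mul_apply]
    field_simp
    ring
  have hD1d : ∀ z : ℝ, z + b ≠ 0 → HasDerivAt (fun z : ℝ => ((-1 : ℝ) * f z + ((1 : ℝ) * b) * ((z + b) * f z) + ((1 : ℝ) * b ^ 2) * ((z + b) ^ 2 * f z) + (-2 : ℝ) * ((z + b) ^ 2 * f z) + (-2 : ℝ) * ((z + b) ^ 3 * (deriv f) z) + (1 : ℝ) * ((z + b) * (deriv f) z) + ((2 : ℝ) * b) * ((z + b) ^ 2 * (deriv f) z) + (1 : ℝ) * ((z + b) ^ 2 * (deriv (deriv f)) z)) / (z + b) ^ 2) (((2 : ℝ) * f z + ((-1 : ℝ) * b) * ((z + b) * f z) + (-2 : ℝ) * ((z + b) * (deriv f) z) + ((1 : ℝ) * b) * ((z + b) ^ 2 * (deriv f) z) + ((1 : ℝ) * b ^ 2) * ((z + b) ^ 3 * (deriv f) z) + (-4 : ℝ) * ((z + b) ^ 3 * (deriv f) z) + (-2 : ℝ) * ((z + b) ^ 4 * (deriv (deriv f)) z) + (1 : ℝ) * ((z + b) ^ 2 * (deriv (deriv f)) z) + ((2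 : ℝ) * b) * ((z + b) ^ 3 * (deriv (deriv f)) z) + (1 : ℝ) * ((z + b) ^ 3 * (deriv (deriv (deriv f))) z)) / (z + b) ^ 3) z := by
    intro z hz
    have h := ((((((((((hd0 z).const_mul (-1 : ℝ)).add (((hs1 z).mul (hd0 z)).const_mul ((1 : ℝ) * b))).add (((hs2 z).mul (hd0 z)).const_mul ((1 : ℝ) * b ^ 2))).add (((hs2 z).mul (hd0 z)).const_mul (-2 : ℝ))).add (((hs3 z).mul (hd1 z)).const_mul (-2 : ℝ))).add (((hs1 z).mul (hd1 z)).const_mul (1 : ℝ))).add (((hs2 z).mul (hd1 z)).const_mul ((2 : ℝ) * b))).add (((hs2 z).mul (hd2 z)).const_mul (1 : ℝ))).div (hs2 z) (pow_ne_zero 2 hz))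
    refine h.congr_deriv ?_
    simp only [Pi.add_apply, Pi.mul_apply]
    field_simp
    ring
  have hD2d : ∀ z : ℝ, z + b ≠ 0 → HasDerivAt (fun z : ℝ => ((2 : ℝ) * f z + ((-1 : ℝ) * b) * ((z + b) * f z) + (-2 : ℝ) * ((z + b) * (deriv f) z) + ((1 : ℝ) * b) * ((z + b) ^ 2 * (deriv f) z) + ((1 : ℝ) * b ^ 2) * ((z + b) ^ 3 * (deriv f) z) + (-4 : ℝ) * ((z + b) ^ 3 * (deriv f) z) + (-2 : ℝ) * ((z + b) ^ 4 * (deriv (deriv f)) z) + (1 : ℝ) * ((z + b) ^ 2 * (deriv (deriv f)) z) + ((2 : ℝ) * b) * ((z + b) ^ 3 * (deriv (deriv f)) z) + (1 : ℝ) * ((z + b) ^ 3 * (deriv (deriv (deriv f))) z)) / (z + b) ^ 3) (((-6 : ℝ) * f z + ((2 : ℝ) * b) * ((z + b) * f z) + (6 : ℝ) * ((z + b) * (deriv f) z) + ((-2 : ℝ) * b) * ((z + b) ^ 2 * (deriv f) z) + (-3 : ℝ) * ((z + b) ^ 2 * (deriv (deriv f)) z) + ((1 : ℝ) * b) * ((z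 + b) ^ 3 * (deriv (deriv f)) z) + ((1 : ℝ) * b ^ 2) * ((z + b) ^ 4 * (deriv (deriv f)) z) + (-6 : ℝ) * ((z + b) ^ 4 * (deriv (deriv f)) z) + (-2 : ℝ) * ((z + b) ^ 5 * (deriv (deriv (deriv f))) z) + (1 : ℝ) * ((z + b) ^ 3 * (deriv (deriv (deriv f))) z) + ((2 : ℝ) * b) * ((z + b) ^ 4 * (deriv (deriv (deriv f))) z) + (1 : ℝ) * ((z + b) ^ 4 * (deriv (deriv (deriv (deriv f)))) z)) / (z + b) ^ 4) z := by
    intro z hz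
    have h := ((((((((((((hd0 z).const_mul (2 : ℝ)).add (((hs1 z).mul (hd0 z)).const_mul ((-1 : ℝ) * b))).add (((hs1 z).mul (hd1 z)).const_mul (-2 : ℝ))).add (((hs2 z).mul (hd1 z)).const_mul ((1 : ℝ) * b))).add (((hs3 z).mul (hd1 z)).const_mul ((1 : ℝ) * b ^ 2))).add (((hs3 z).mul (hd1 z)).const_mul (-4 : ℝ))).add (((hs4 z).mul (hd2 z)).const_mul (-2 : ℝ))).add (((hs2 z).mul (hd2 z)).const_mul (1 : ℝ))).add (((hs3 z).mul (hd2 z)).const_mul ((2 : ℝ) * b))).add (((hs3 z).mul (hd3 z)).const_mul (1 : ℝ))).div (hs3 z) (pow_ne_zero 3 hz))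
    refine h.congr_deriv ?_
    simp only [Pi.add_apply, Pi.mul_apply]
    field_simp
    ring
  have hBd : ∀ z : ℝ, HasDerivAt (fun z : ℝ => ((1 : ℝ) * b ^ 2) * ((z + b) * f z) + (-4 : ℝ) * ((z + b) * f z) + ((2 : ℝ) * b) * f z + (-2 : ℝ) * ((z + b) ^ 2 * (deriv f) z) + ((2 : ℝ) * b) * ((z + b) * (deriv f) z) + (2 : ℝ) * (deriv f) z + (1 : ℝ) * ((z + b) * (deriv (deriv f)) z)) (((1 : ℝ) * b ^ 2) * f z + (-4 : ℝ) * f z + ((1 : ℝ) * b ^ 2) * ((z + b) * (deriv f) z) + (-8 : ℝ) * ((z + b) * (deriv f) z) + ((4 : ℝ) * b) * (deriv f) z + (-2 : ℝ) * ((z + b) ^ 2 * (deriv (deriv f)) z) + ((2 : ℝ) * b) * ((z + b) * (deriv (deriv f)) z) + (3 : ℝ) * (deriv (deriv f)) z + (1 : ℝ) * ((z + b) * (deriv (deriv (deriv f))) z)) z := by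
    intro z
    have h := (((((((((hs1 z).mul (hd0 z)).const_mul ((1 : ℝ) * b ^ 2)).add (((hs1 z).mul (hd0 z)).const_mul (-4 : ℝ))).add ((hd0 z).const_mul ((2 : ℝ) * b))).add (((hs2 z).mul (hd1 z)).const_mul (-2 : ℝ))).add (((hs1 z).mul (hd1 z)).const_mul ((2 : ℝ) * b))).add ((hd1 z).const_mul (2 : ℝ))).add (((hs1 z).mul (hd2 z)).const_mul (1 : ℝ)))
    refine h.congr_deriv ?_
    field_simp
    ring
  have hB2d : ∀ z : ℝ, HasDerivAt (fun z : ℝ => ((1 : ℝ) * b ^ 2) * f z + (-4 : ℝ) * f z + ((1 : ℝ) * b ^ 2) * ((z + b) * (deriv f) z) + (-8 : ℝ) * ((z + b) * (deriv f) z) + ((4 : ℝ) * b) * (deriv f) z + (-2 : ℝ) * ((z + b) ^ 2 * (deriv (deriv f)) z) + ((2 : ℝ) * b) * ((z + b) * (deriv (deriv f)) z) + (3 : ℝ) * (deriv (deriv f)) z + (1 : ℝ) * ((z + b) * (deriv (deriv (deriv f))) z)) (((2 : ℝ) * b ^ 2) * (deriv f) z + (-12 : ℝ) * (deriv f) z +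 ((1 : ℝ) * b ^ 2) * ((z + b) * (deriv (deriv f)) z) + (-12 : ℝ) * ((z + b) * (deriv (deriv f)) z) + ((6 : ℝ) * b) * (deriv (deriv f)) z + (-2 : ℝ) * ((z + b) ^ 2 * (deriv (deriv (deriv f))) z) + ((2 : ℝ) * b) * ((z + b) * (deriv (deriv (deriv f))) z) + (4 : ℝ) * (deriv (deriv (deriv f))) z + (1 : ℝ) * ((z + b) * (deriv (deriv (deriv (deriv f)))) z)) z := by
    intro z
    have h := ((((((((((hd0 z).const_mul ((1 : ℝ) * b ^ 2)).add ((hd0 z).const_mul (-4 : ℝ))).add (((hs1 z).mul (hd1 z)).const_mul ((1 : ℝ) * b ^ 2))).add (((hs1 z).mul (hd1 z)).const_mul (-8 : ℝ))).add ((hd1 z).const_mul ((4 : ℝ) * b))).add (((hs2 z).mul (hd2 z)).const_mul (-2 : ℝ))).add (((hs1 z).mul (hd2 z)).const_mul ((2 : ℝ) * b))).add ((hd2 z).const_mul (3 : ℝ))).add (((hs1 z).mul (hd3 z)).const_mul (1 : ℝ)))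
    refine h.congr_deriv ?_
    field_simp
    ring
  have hA1eq : ∀ z : ℝ, z + b ≠ 0 → Ahat b (fun y => (y + b) * f y) z = (((1 : ℝ) * b ^ 2) * ((z + b) ^ 2 * f z) + (-2 : ℝ) * ((z + b) ^ 2 * f z) + (-1 : ℝ) * f z + ((1 : ℝ) * b) * ((z + b) * f z) + (-2 : ℝ) * ((z + b) ^ 3 * (deriv f) z) + ((2 : ℝ) * b) * ((z + b) ^ 2 * (deriv f) z) + (1 : ℝ) * ((z + b) * (deriv f) z) + (1 : ℝ) * ((z + b) ^ 2 * (deriv (deriv f)) z)) / (z + b) := by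
    intro z hz
    simp only [Ahat, T2, Uop]
    rw [hddg z, hdg z]
    field_simp
    ring
  have hAdageq : ∀ z : ℝ, z + b ≠ 0 → Adag b f z = ((-1 : ℝ) * f z + ((1 : ℝ) * b) * ((z + b) * f z) + ((1 : ℝ) * b ^ 2) * ((z + b) ^ 2 * f z) + (-2 : ℝ) * ((z + b) ^ 2 * f z) + (-2 : ℝ) * ((z + b) ^ 3 * (deriv f) z) + (1 : ℝ) * ((z + b) * (deriv f) z) + ((2 : ℝ) * b) * ((z + b) ^ 2 * (deriv f) z) + (1 : ℝ) * ((z + b) ^ 2 * (deriv (deriv f)) z)) / (z + b) ^ 2 := by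
    intro z hz
    simp only [Adag, T2, Vop]
    rw [((hd0 z).fun_div (hs1 z) hz).deriv]
    field_simp
    ring
  have hU : ∀ᶠ z in nhds x, z + b ≠ 0 := by
    filter_upwards [eventually_ne_nhds hx] with z hz
    intro h
    exact hz (by linarith)
  have EA : (Ahat b fun y => (y + b) * f y) =ᶠ[nhds x] (fun z : ℝ => (((1 : ℝ) * b ^ 2) * ((z + b) ^ 2 * f z) + (-2 : ℝ) * ((z + b) ^ 2 * f z) + (-1 : ℝ) * f z + ((1 : ℝ) * b) * ((z + b) * f z) + (-2 : ℝ) * ((z + b) ^ 3 * (deriv f) z) + ((2 : ℝ) * b) * ((z + b) ^ 2 * (deriv f) z) + (1 : ℝ) * ((z + b) * (deriv f) z) + (1 : ℝ) * ((z + b) ^ 2 * (deriv (deriv f)) z)) / (z + b)) := hU.mono hA1eq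
  have EA' : deriv (Ahat b fun y => (y + b) * f y) =ᶠ[nhds x] (fun z : ℝ => ((1 : ℝ) * f z + ((1 : ℝ) * b ^ 2) * ((z + b) ^ 2 * f z) + (-2 : ℝ) * ((z + b) ^ 2 * f z) + ((1 : ℝ) * b ^ 2) * ((z + b) ^ 3 * (deriv f) z) + (-6 : ℝ) * ((z + b) ^ 3 * (deriv f) z) + (-1 : ℝ) * ((z + b) * (deriv f) z) + ((3 : ℝ) * b) * ((z + b) ^ 2 * (deriv f) z) + (-2 : ℝ) * ((z + b) ^ 4 * (deriv (deriv f)) z) + ((2 : ℝ) * b) * ((z + b) ^ 3 * (deriv (deriv f)) z) + (2 : ℝ) * ((z + b) ^ 2 * (deriv (deriv f)) z) + (1 : ℝ) * ((z + b) ^ 3 * (deriv (deriv (deriv f))) z)) / (z + b) ^ 2) :=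
    EA.deriv.trans (hU.mono fun z hz => (hA1d z hz).deriv)
  have e1 : Ahat b (fun y => (y + b) * f y) x = (((1 : ℝ) * b ^ 2) * ((x + b) ^ 2 * f x) + (-2 : ℝ) * ((x + b) ^ 2 * f x) + (-1 : ℝ) * f x + ((1 : ℝ) * b) * ((x + b) * f x) + (-2 : ℝ) * ((x + b) ^ 3 * (deriv f) x) + ((2 : ℝ) * b) * ((x + b) ^ 2 * (deriv f) x) + (1 : ℝ) * ((x + b) * (deriv f) x) + (1 : ℝ) * ((x + b) ^ 2 * (deriv (deriv f)) x)) / (x + b) := hA1eq x hx'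
  have e2 : deriv (Ahat b fun y => (y + b) * f y) x = ((1 : ℝ) * f x + ((1 : ℝ) * b ^ 2) * ((x + b) ^ 2 * f x) + (-2 : ℝ) * ((x + b) ^ 2 * f x) + ((1 : ℝ) * b ^ 2) * ((x + b) ^ 3 * (deriv f) x) + (-6 : ℝ) * ((x + b) ^ 3 * (deriv f) x) + (-1 : ℝ) * ((x + b) * (deriv f) x) + ((3 : ℝ) * b) * ((x + b) ^ 2 * (deriv f) x) + (-2 : ℝ) * ((x + b) ^ 4 * (deriv (deriv f)) x) + ((2 : ℝ) * b) * ((x + b) ^ 3 * (deriv (deriv f)) x) + (2 : ℝ) * ((x + b) ^ 2 * (deriv (deriv f)) x) + (1 : ℝ) * ((x + b) ^ 3 * (deriv (deriv (deriv f))) x)) / (x + b) ^ 2 := EA'.eq_of_nhds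
  have e3 : deriv (deriv (Ahat b fun y => (y + b) * f y)) x = ((-2 : ℝ) * f x + (2 : ℝ) * ((x + b) * (deriv f) x) + ((2 : ℝ) * b ^ 2) * ((x + b) ^ 3 * (deriv f) x) + (-8 : ℝ) * ((x + b) ^ 3 * (deriv f) x) + ((1 : ℝ) * b ^ 2) * ((x + b) ^ 4 * (deriv (deriv f)) x) + (-10 : ℝ) * ((x + b) ^ 4 * (deriv (deriv f)) x) + (-1 : ℝ) * ((x + b) ^ 2 * (deriv (deriv f)) x) + ((5 : ℝ) * b) * ((x + b) ^ 3 * (deriv (deriv f)) x) + (-2 : ℝ) * ((x + b) ^ 5 * (deriv (deriv (deriv f))) x) + ((2 : ℝ) * b) * ((x + b) ^ 4 * (deriv (deriv (deriv f))) x) + (3 : ℝ) * ((x + b) ^ 3 * (deriv (deriv (deriv f))) x) + (1 : ℝ) * ((x + b) ^ 4 * (deriv (deriv (deriv (deriv f)))) x)) / (x + b) ^ 3 :=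
    EA'.deriv_eq.trans ((hA2d x hx').deriv)
  have ED : Adag b f =ᶠ[nhds x] (fun z : ℝ => ((-1 : ℝ) * f z + ((1 : ℝ) * b) * ((z + b) * f z) + ((1 : ℝ) * b ^ 2) * ((z + b) ^ 2 * f z) + (-2 : ℝ) * ((z + b) ^ 2 * f z) + (-2 : ℝ) * ((z + b) ^ 3 * (deriv f) z) + (1 : ℝ) * ((z + b) * (deriv f) z) + ((2 : ℝ) * b) * ((z + b) ^ 2 * (deriv f) z) + (1 : ℝ) * ((z + b) ^ 2 * (deriv (deriv f)) z)) / (z + b) ^ 2) := hU.mono hAdageq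
  have ED' : deriv (Adag b f) =ᶠ[nhds x] (fun z : ℝ => ((2 : ℝ) * f z + ((-1 : ℝ) * b) * ((z + b) * f z) + (-2 : ℝ) * ((z + b) * (deriv f) z) + ((1 : ℝ) * b) * ((z + b) ^ 2 * (deriv f) z) + ((1 : ℝ) * b ^ 2) * ((z + b) ^ 3 * (deriv f) z) + (-4 : ℝ) * ((z + b) ^ 3 * (deriv f) z) + (-2 : ℝ) * ((z + b) ^ 4 * (deriv (deriv f)) z) + (1 : ℝ) * ((z + b) ^ 2 * (deriv (deriv f)) z) + ((2 : ℝ) * b) * ((z + b) ^ 3 * (deriv (deriv f)) z) + (1 : ℝ) * ((z + b) ^ 3 * (deriv (deriv (deriv f))) z)) / (z + b) ^ 3) :=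
    ED.deriv.trans (hU.mono fun z hz => (hD1d z hz).deriv)
  have d1 : Adag b f x = ((-1 : ℝ) * f x + ((1 : ℝ) * b) * ((x + b) * f x) + ((1 : ℝ) * b ^ 2) * ((x + b) ^ 2 * f x) + (-2 : ℝ) * ((x + b) ^ 2 * f x) + (-2 : ℝ) * ((x + b) ^ 3 * (deriv f) x) + (1 : ℝ) * ((x + b) * (deriv f) x) + ((2 : ℝ) * b) * ((x + b) ^ 2 * (deriv f) x) + (1 : ℝ) * ((x + b) ^ 2 * (deriv (deriv f)) x)) / (x + b) ^ 2 := hAdageq x hx'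
  have d2 : deriv (Adag b f) x = ((2 : ℝ) * f x + ((-1 : ℝ) * b) * ((x + b) * f x) + (-2 : ℝ) * ((x + b) * (deriv f) x) + ((1 : ℝ) * b) * ((x + b) ^ 2 * (deriv f) x) + ((1 : ℝ) * b ^ 2) * ((x + b) ^ 3 * (deriv f) x) + (-4 : ℝ) * ((x + b) ^ 3 * (deriv f) x) + (-2 : ℝ) * ((x + b) ^ 4 * (deriv (deriv f)) x) + (1 : ℝ) * ((x + b) ^ 2 * (deriv (deriv f)) x) + ((2 : ℝ) * b) * ((x + b) ^ 3 * (deriv (deriv f)) x) + (1 : ℝ) * ((x + b) ^ 3 * (deriv (deriv (deriv f))) x)) / (x + b) ^ 3 := ED'.eq_of_nhds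
  have d3 : deriv (deriv (Adag b f)) x = ((-6 : ℝ) * f x + ((2 : ℝ) * b) * ((x + b) * f x) + (6 : ℝ) * ((x + b) * (deriv f) x) + ((-2 : ℝ) * b) * ((x + b) ^ 2 * (deriv f) x) + (-3 : ℝ) * ((x + b) ^ 2 * (deriv (deriv f)) x) + ((1 : ℝ) * b) * ((x + b) ^ 3 * (deriv (deriv f)) x) + ((1 : ℝ) * b ^ 2) * ((x + b) ^ 4 * (deriv (deriv f)) x) + (-6 : ℝ) * ((x + b) ^ 4 * (deriv (deriv f)) x) + (-2 : ℝ) * ((x + b) ^ 5 * (deriv (deriv (deriv f))) x) + (1 : ℝ) * ((x + b) ^ 3 * (deriv (deriv (deriv f))) x) + ((2 : ℝ) * b) * ((x + b) ^ 4 * (deriv (deriv (deriv f))) x) + (1 : ℝ) * ((x + b) ^ 4 * (deriv (deriv (deriv (deriv f)))) x)) / (x + b) ^ 4 :=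
    ED'.deriv_eq.trans ((hD2d x hx').deriv)
  have hBfun : (fun y => T2 (fun y => (y + b) * f y) y + (b ^ 2 - 2) * ((y + b) * f y)) = (fun z : ℝ => ((1 : ℝ) * b ^ 2) * ((z + b) * f z) + (-4 : ℝ) * ((z + b) * f z) + ((2 : ℝ) * b) * f z + (-2 : ℝ) * ((z + b) ^ 2 * (deriv f) z) + ((2 : ℝ) * b) * ((z + b) * (deriv f) z) + (2 : ℝ) * (deriv f) z + (1 : ℝ) * ((z + b) * (deriv (deriv f)) z)) := by
    funext z
    simp only [T2]
    rw [hddg z, hdg z]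
    ring
  have hBderiv : deriv (fun z : ℝ => ((1 : ℝ) * b ^ 2) * ((z + b) * f z) + (-4 : ℝ) * ((z + b) * f z) + ((2 : ℝ) * b) * f z + (-2 : ℝ) * ((z + b) ^ 2 * (deriv f) z) + ((2 : ℝ) * b) * ((z + b) * (deriv f) z) + (2 : ℝ) * (deriv f) z + (1 : ℝ) * ((z + b) * (deriv (deriv f)) z)) = (fun z : ℝ => ((1 : ℝ) * b ^ 2) * f z + (-4 : ℝ) * f z + ((1 : ℝ) * b ^ 2) * ((z + b) * (deriv f) z) + (-8 : ℝ) * ((z + b) * (deriv f) z) + ((4 : ℝ) * b) * (deriv f) z + (-2 : ℝ) * ((z + b) ^ 2 * (deriv (deriv f)) z) + ((2 : ℝ) * b) * ((z + b) * (deriv (deriv f)) z) + (3 : ℝ) * (deriv (deriv f)) z + (1 : ℝ) * ((z + b) * (deriv (deriv (deriv f))) z)) := funext fun z => (hBd z).deriv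
  have b2e : deriv (fun y => T2 (fun y => (y + b) * f y) y + (b ^ 2 - 2) * ((y + b) * f y)) x = ((1 : ℝ) * b ^ 2) * f x + (-4 : ℝ) * f x + ((1 : ℝ) * b ^ 2) * ((x + b) * (deriv f) x) + (-8 : ℝ) * ((x + b) * (deriv f) x) + ((4 : ℝ) * b) * (deriv f) x + (-2 : ℝ) * ((x + b) ^ 2 * (deriv (deriv f)) x) + ((2 : ℝ) * b) * ((x + b) * (deriv (deriv f)) x) + (3 : ℝ) * (deriv (deriv f)) x + (1 : ℝ) * ((x + b) * (deriv (deriv (deriv f))) x) := by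
    rw [hBfun, hBderiv]
  have b3e : deriv (deriv (fun y => T2 (fun y => (y + b) * f y) y + (b ^ 2 - 2) * ((y + b) * f y))) x
      = ((2 : ℝ) * b ^ 2) * (deriv f) x + (-12 : ℝ) * (deriv f) x + ((1 : ℝ) * b ^ 2) * ((x + b) * (deriv (deriv f)) x) + (-12 : ℝ) * ((x + b) * (deriv (deriv f)) x) + ((6 : ℝ) * b) * (deriv (deriv f)) x + (-2 : ℝ) * ((x + b) ^ 2 * (deriv (deriv (deriv f))) x) + ((2 : ℝ) * b) * ((x + b) * (deriv (deriv (deriv f))) x) + (4 : ℝ) * (deriv (deriv (deriv f))) x + (1 : ℝ) * ((x + b) * (deriv (deriv (deriv (deriv f)))) x) := by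
    rw [hBfun, hBderiv]
    exact (hB2d x).deriv
  rw [show T4tilde b (fun y => (y + b) * f y) x
      = 4 * (T2 (Ahat b (fun y => (y + b) * f y)) x + (b ^ 2 - 1) * Ahat b (fun y => (y + b) * f y) x)
        - 3 * (T2 (fun y => T2 (fun y => (y + b) * f y) y + (b ^ 2 - 2) * ((y + b) * f y)) x
            + b ^ 2 * (T2 (fun y => (y + b) * f y) x + (b ^ 2 - 2) * ((x + b) * f x))) from rfl]
  rw [show T2 (Ahat b (fun y => (y + b) * f y)) x
      = deriv (deriv (Ahat b (fun y => (y + b) * f y))) x - 2 * x * deriv (Ahat b (fun y => (y + b) * f y)) x from rfl]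
  rw [show T2 (fun y => T2 (fun y => (y + b) * f y) y + (b ^ 2 - 2) * ((y + b) * f y)) x
      = deriv (deriv (fun y => T2 (fun y => (y + b) * f y) y + (b ^ 2 - 2) * ((y + b) * f y))) x
        - 2 * x * deriv (fun y => T2 (fun y => (y + b) * f y) y + (b ^ 2 - 2) * ((y + b) * f y)) x from rfl]
  rw [show T2 (fun y => (y + b) * f y) x = deriv (deriv (fun y => (y + b) * f y)) x - 2 * x * deriv (fun y => (y + b) * f y) x from rfl]
  rw [show Ahat b (Adag b f) x
      = (deriv (deriv (Adag b f)) x - 2 * x * deriv (Adag b f) x) + b ^ 2 * Adag b f x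
        - (deriv (Adag b f) x + b * Adag b f x) / (x + b) from rfl]
  rw [e3, e2, e1, b3e, b2e, hddg x, hdg x, d3, d2, d1]
  field_simp
  ring
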